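/- Let μ be the PPTA function with parameters 0 < T* < T, let c₁ > 1/T and d_m ≥ 0, let g : [0, ∞) → ℝ³ be continuous with ‖g(t)‖ ≤ d_m for all t, and let e : [0, ∞) → ℝ³ be differentiable satisfying e′(t) = g(t) − c₁·μ(t)·e(t). Then for every t ≥ T*, (1/2)‖e(t)‖² ≤ max{v₁, v₂}, where v₁ = ((T − T*)/T)^{c₁T}·(1/2)‖e(0)‖² + (d_m²T/(2c₁(c₁T − 1)))·[ (T − T*)/T − ((T − T*)/T)^{c₁T} ] and v₂ = d_m²(T − T*)/(2c₁²T); i.e., the prescribed-time disturbance observer error converges to a residual set within the prescribed time T*. -/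

import Mathlib

/-!
With `V = ‖e‖² / 2`, Cauchy–Schwarz, Young's inequality and `μ ≥ 1` give the scalar differential
inequality `V' ≤ -c₁ μ V + d_m² / (2 c₁)`. On `[0, T*]` the gain is `c₁ T / (T - t)`, and the
integrating factor `((T - t) / T) ^ (-c₁ T)` yields `V(T*) ≤ v₁`. After `T*` the gain is at least
`k = c₁ T / (T - T*)`, so `V' ≤ -k (V - v₂)` and `V` can never rise above `max (V(T*)) v₂`.
-/

/-- The saturated prescribed-time adjustment (PPTA) function `μ` with
parameters `T` and `Ts` (denoted `T*` in the paper). -/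
noncomputable def mu (T Ts : ℝ) (t : ℝ) : ℝ :=
  if t ≤ Ts then T / (T - t)
  else if t < T then
    (T / (T - Ts)) * (1 + (2 / Real.pi) * Real.sin ((Real.pi / 2) * ((t - Ts) / (T - Ts))))
  else ((Real.pi + 2) / Real.pi) * (T / (T - Ts))

open Set Real

section PPTA

variable {T Ts t : ℝ}

theorem mu_of_le (ht : t ≤ Ts) : mu T Ts t = T / (T - t) := if_pos ht

theorem div_sub_le_mu (hT0 : 0 ≤ T) (hT : Ts < T) (ht : Ts ≤ t) : T / (T - Ts) ≤ mu T Ts t := by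
  have hq : 0 ≤ T / (T - Ts) := div_nonneg hT0 (sub_pos.2 hT).le
  unfold mu
  split_ifs with h₁ h₂
  · rw [le_antisymm h₁ ht]
  · have hθ : 0 ≤ (t - Ts) / (T - Ts) := div_nonneg (by linarith) (by linarith)
    have hθ₁ : (t - Ts) / (T - Ts) ≤ 1 := (div_le_one (by linarith)).2 (by linarith)
    have hsin : 0 ≤ Real.sin (π / 2 * ((t - Ts) / (T - Ts))) :=
      sin_nonneg_of_nonneg_of_le_pi (by positivity) (by nlinarith [pi_pos])
    exact le_mul_of_one_le_right hq (by simp only [le_add_iff_nonneg_right]; positivity)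
  · exact le_mul_of_one_le_left hq ((one_le_div pi_pos).2 (by linarith))

theorem one_le_mu (hTs : 0 ≤ Ts) (hT : Ts < T) (ht : 0 ≤ t) : 1 ≤ mu T Ts t := by
  rcases le_or_gt t Ts with h | h
  · rw [mu_of_le h, one_le_div (by linarith)]
    linarith
  · exact ((one_le_div (by linarith)).2 (by linarith)).trans
      (div_sub_le_mu (by linarith) hT h.le)

end PPTA

theorem inner_sub_smul_le {E : Type*} [NormedAddCommGroup E] [InnerProductSpace ℝ E]
    {c m d : ℝ} (hc : 0 < c) (hm : 1 ≤ m) {x y : E} (hy : ‖y‖ ≤ d) :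
    inner ℝ x (y - (c * m) • x) ≤ -(c * m) * (1 / 2 * ‖x‖ ^ 2) + d ^ 2 / (2 * c) := by
  have hxy : inner ℝ x y ≤ ‖x‖ * d :=
    (real_inner_le_norm x y).trans (mul_le_mul_of_nonneg_left hy (norm_nonneg x))
  have young : ‖x‖ * d ≤ c * ‖x‖ ^ 2 / 2 + d ^ 2 / (2 * c) := by
    have hsq : c * ‖x‖ ^ 2 / 2 + d ^ 2 / (2 * c) - ‖x‖ * d = (c * ‖x‖ - d) ^ 2 / (2 * c) := by
      field_simp
      ring
    nlinarith [div_nonneg (sq_nonneg (c * ‖x‖ - d)) (by positivity : (0 : ℝ) ≤ 2 * c)]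
  have hgain : c * ‖x‖ ^ 2 ≤ c * m * ‖x‖ ^ 2 := by
    nlinarith [mul_nonneg hc.le (sq_nonneg ‖x‖)]
  rw [inner_sub_right, real_inner_smul_right, real_inner_self_eq_norm_sq]
  linarith

section Comparison

variable {V V' : ℝ → ℝ} {a b : ℝ}

theorem antitoneOn_mul_sub_of_deriv_le {φ Q p q : ℝ → ℝ}
    (hV : ∀ s ∈ Icc a b, HasDerivWithinAt V (V' s) (Icc a b) s)
    (hφ : ∀ s ∈ Icc a b, HasDerivWithinAt φ (p s * φ s) (Icc a b) s)
    (hQ : ∀ s ∈ Icc a b, HasDerivWithinAt Q (q s * φ s) (Icc a b) s)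
    (hφ₀ : ∀ s ∈ Ioo a b, 0 ≤ φ s) (hle : ∀ s ∈ Ioo a b, V' s ≤ -p s * V s + q s) :
    AntitoneOn (fun s => V s * φ s - Q s) (Icc a b) := by
  have hG : ∀ s ∈ Icc a b, HasDerivWithinAt (fun s => V s * φ s - Q s)
      (V' s * φ s + V s * (p s * φ s) - q s * φ s) (Icc a b) s :=
    fun s hs => ((hV s hs).mul (hφ s hs)).sub (hQ s hs)
  refine antitoneOn_of_hasDerivWithinAt_nonpos (convex_Icc a b)
    (f' := fun s => V' s * φ s + V s * (p s * φ s) - q s * φ s)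
    (fun s hs => (hG s hs).continuousWithinAt) (fun s hs => ?_) (fun s hs => ?_)
  · rw [interior_Icc] at hs ⊢
    exact (hG s (Ioo_subset_Icc_self hs)).mono Ioo_subset_Icc_self
  · rw [interior_Icc] at hs
    have h := mul_le_mul_of_nonneg_right (hle s hs) (hφ₀ s hs)
    linarith

theorem le_max_of_deriv_le_neg_mul_sub {k v : ℝ} (hab : a ≤ b) (hk : 0 ≤ k)
    (hV : ∀ s ∈ Icc a b, HasDerivWithinAt V (V' s) (Icc a b) s)
    (hle : ∀ s ∈ Ioo a b, V' s ≤ -k * (V s - v)) : V b ≤ max (V a) v := by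
  have hexp : ∀ s, HasDerivWithinAt (fun s => exp (k * s)) (k * exp (k * s)) (Icc a b) s :=
    fun s => by simpa [mul_comm] using ((hasDerivAt_id s).const_mul k).exp.hasDerivWithinAt
  have hanti := antitoneOn_mul_sub_of_deriv_le (Q := fun s => v * exp (k * s))
    (q := fun _ => k * v) hV (fun s _ => hexp s)
    (fun s _ => ((hexp s).const_mul v).congr_deriv (by ring))
    (fun s _ => (exp_pos _).le) (fun s hs => by linarith [hle s hs])
    (left_mem_Icc.2 hab) (right_mem_Icc.2 hab) hab
  rcases le_or_gt (V b) v with h | h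
  · exact le_max_of_le_right h
  · have hmono : exp (k * a) ≤ exp (k * b) := exp_le_exp.2 (by nlinarith)
    refine le_max_of_le_left ?_
    nlinarith [exp_pos (k * a)]

theorem le_of_deriv_le_neg_mul_div_sub {T Ts c q : ℝ} (hTs : 0 ≤ Ts) (hT : Ts < T)
    (hcT : c * T ≠ 1) (hV : ∀ s ∈ Icc 0 Ts, HasDerivWithinAt V (V' s) (Icc 0 Ts) s)
    (hle : ∀ s ∈ Ioo 0 Ts, V' s ≤ -(c * (T / (T - s))) * V s + q) :
    V Ts ≤ ((T - Ts) / T) ^ (c * T) * V 0 +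
      q * T / (c * T - 1) * ((T - Ts) / T - ((T - Ts) / T) ^ (c * T)) := by
  have hT0 : 0 < T := hTs.trans_lt hT
  have hn : c * T - 1 ≠ 0 := sub_ne_zero.2 hcT
  set n := c * T
  set C := q * T / (n - 1)
  set u : ℝ → ℝ := fun s => (T - s) / T
  have hu : ∀ s ∈ Icc 0 Ts, HasDerivAt u (-1 / T) s := fun s _ => by
    simpa using ((hasDerivAt_id s).const_sub T).div_const T
  have hu₀ : ∀ s ∈ Icc 0 Ts, 0 < u s := fun s hs => div_pos (by linarith [hs.2]) hT0
  have hφ : ∀ s ∈ Icc 0 Ts, HasDerivWithinAt (fun s => u s ^ (-n))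
      (c * (T / (T - s)) * u s ^ (-n)) (Icc 0 Ts) s := by
    intro s hs
    refine (((hu s hs).rpow_const (Or.inl (hu₀ s hs).ne')).congr_deriv ?_).hasDerivWithinAt
    have : T - s ≠ 0 := by linarith [hs.2]
    rw [rpow_sub_one (hu₀ s hs).ne']
    simp only [u, n]
    field_simp
  have hQ : ∀ s ∈ Icc 0 Ts, HasDerivWithinAt (fun s => C * u s ^ (1 - n))
      (q * u s ^ (-n)) (Icc 0 Ts) s := by
    intro s hs
    refine ((((hu s hs).rpow_const (Or.inl (hu₀ s hs).ne')).const_mul C).congr_deriv ?_)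
      |>.hasDerivWithinAt
    rw [show 1 - n - 1 = -n by ring]
    simp only [C]
    field_simp
    ring
  have hanti := antitoneOn_mul_sub_of_deriv_le hV hφ hQ
    (fun s hs => (rpow_pos_of_pos (hu₀ s (Ioo_subset_Icc_self hs)) _).le) hle
    (left_mem_Icc.2 hTs) (right_mem_Icc.2 hTs) hTs
  have hr := hu₀ Ts (right_mem_Icc.2 hTs)
  have hR := rpow_pos_of_pos hr n
  have hu0 : u 0 = 1 := by simp [u, hT0.ne']
  simp only [hu0, one_rpow, mul_one, rpow_neg hr.le, rpow_sub hr, rpow_one] at hanti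
  rw [← div_eq_mul_inv, mul_div_assoc', ← sub_div, div_le_iff₀ hR] at hanti
  nlinarith

end Comparison

theorem ptdo_error_prescribed_time_bound_general
    (T Ts : ℝ) (hTs : 0 < Ts) (hT : Ts < T)
    (c₁ dm : ℝ) (hc₁ : 1 / T < c₁)
    (g : ℝ → EuclideanSpace ℝ (Fin 3))
    (hg : ∀ t ∈ Set.Ici (0 : ℝ), ‖g t‖ ≤ dm)
    (e : ℝ → EuclideanSpace ℝ (Fin 3))
    (he : ∀ t ∈ Set.Ici (0 : ℝ),
      HasDerivWithinAt e (g t - (c₁ * mu T Ts t) • e t) (Set.Ici 0) t) :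
    ∀ t ≥ Ts,
      (1 / 2) * ‖e t‖ ^ 2 ≤ max
        (((T - Ts) / T) ^ (c₁ * T) * ((1 / 2) * ‖e 0‖ ^ 2) +
          (dm ^ 2 * T / (2 * c₁ * (c₁ * T - 1))) *
            ((T - Ts) / T - ((T - Ts) / T) ^ (c₁ * T)))
        (dm ^ 2 * (T - Ts) / (2 * c₁ ^ 2 * T)) := by
  intro t ht
  have hT0 : 0 < T := hTs.trans hT
  have hc₁0 : 0 < c₁ := (one_div_pos.2 hT0).trans hc₁
  have hcT : 1 < c₁ * T := by rwa [div_lt_iff₀ hT0] at hc₁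
  set V : ℝ → ℝ := fun s => 1 / 2 * ‖e s‖ ^ 2
  have hV : ∀ s ∈ Ici (0 : ℝ), HasDerivWithinAt V
      (inner ℝ (e s) (g s - (c₁ * mu T Ts s) • e s)) (Ici 0) s :=
    fun s hs => ((he s hs).norm_sq.const_mul (1 / 2)).congr_deriv (by ring)
  have hV' : ∀ s ∈ Ici (0 : ℝ), inner ℝ (e s) (g s - (c₁ * mu T Ts s) • e s) ≤
      -(c₁ * mu T Ts s) * V s + dm ^ 2 / (2 * c₁) :=
    fun s hs => inner_sub_smul_le hc₁0 (one_le_mu hTs.le hT hs) (hg s hs)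
  have hv₁ := le_of_deriv_le_neg_mul_div_sub hTs.le hT hcT.ne'
    (fun s hs => (hV s hs.1).mono Icc_subset_Ici_self)
    (fun s hs => by simpa only [mu_of_le hs.2.le] using hV' s hs.1.le)
  have hv₂ : V t ≤ max (V Ts) (dm ^ 2 * (T - Ts) / (2 * c₁ ^ 2 * T)) := by
    refine le_max_of_deriv_le_neg_mul_sub (k := c₁ * (T / (T - Ts))) ht
      (by have := sub_pos.2 hT; positivity)
      (fun s hs => (hV s (hTs.le.trans hs.1)).mono fun x hx => hTs.le.trans hx.1) fun s hs => ?_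
    have hgain := mul_le_mul_of_nonneg_left (div_sub_le_mu hT0.le hT hs.1.le) hc₁0.le
    have hq : c₁ * (T / (T - Ts)) * (dm ^ 2 * (T - Ts) / (2 * c₁ ^ 2 * T)) = dm ^ 2 / (2 * c₁) := by
      field_simp [(sub_pos.2 hT).ne']
    nlinarith [hV' s (hTs.le.trans hs.1.le), mul_le_mul_of_nonneg_right hgain
      (by positivity : 0 ≤ V s)]
  refine hv₂.trans (max_le_max_right _ (hv₁.trans_eq ?_))
  congr 2
  rw [div_mul_eq_mul_div, div_div]

/-- the prescribed-time disturbance observer error `e`, with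
dynamics `e′ = g − c₁ μ e`, `‖g‖ ≤ d_m`, `c₁ > 1/T`, satisfies for every
`t ≥ T*` the bound `(1/2)‖e(t)‖² ≤ max{v₁, v₂}`. -/
theorem ptdo_error_prescribed_time_bound
    (T Ts : ℝ) (hTs : 0 < Ts) (hT : Ts < T)
    (c₁ dm : ℝ) (hc₁ : 1 / T < c₁) (hdm : 0 ≤ dm)
    (g : ℝ → EuclideanSpace ℝ (Fin 3)) (hgcont : ContinuousOn g (Set.Ici 0))
    (hg : ∀ t ∈ Set.Ici (0 : ℝ), ‖g t‖ ≤ dm)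
    (e : ℝ → EuclideanSpace ℝ (Fin 3))
    (he : ∀ t ∈ Set.Ici (0 : ℝ),
      HasDerivWithinAt e (g t - (c₁ * mu T Ts t) • e t) (Set.Ici 0) t) :
    ∀ t ≥ Ts,
      (1 / 2) * ‖e t‖ ^ 2 ≤ max
        (((T - Ts) / T) ^ (c₁ * T) * ((1 / 2) * ‖e 0‖ ^ 2) +
          (dm ^ 2 * T / (2 * c₁ * (c₁ * T - 1))) *
            ((T - Ts) / T - ((T - Ts) / T) ^ (c₁ * T)))
        (dm ^ 2 * (T - Ts) / (2 * c₁ ^ 2 * T)) :=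
  ptdo_error_prescribed_time_bound_general T Ts hTs hT c₁ dm hc₁ g hg e he
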